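/- arXiv:2510.08124 — 2 statements merged into one kernel-verified Lean document; each statement's English description precedes it below -/
import Mathlib

section
/- Let 𝒢 = (G_1,…,G_T) be a temporal graph on n vertices in which every snapshot G_i has fewer than n/2 edges. If a k-activity ℓ-timeline 𝒯 dominates every temporal vertex of 𝒢, then T ≤ 2·k·(ℓ+1). -/
/-!
A vertex outside a dominating set `S` of a graph is joined to `S` by an edge, and distinct such
vertices give distinct edges, so `n ≤ |S| + |E|`. Hence every snapshot with `2|E| < n` has more
than `n/2` active vertices, and summing over the `T` snapshots gives `T · n / 2` active temporal
vertices. On the other hand every vertex has at most `k` intervals, each covering at most `ℓ + 1`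
times, so there are at most `n · k · (ℓ + 1)` active temporal vertices.
-/

open Finset

theorem SimpleGraph.card_le_card_add_card_edgeFinset_of_dominating {V : Type*} [Fintype V]
    [DecidableEq V] (G : SimpleGraph V) [DecidableRel G.Adj] (S : Finset V)
    (hS : ∀ v ∉ S, ∃ u ∈ S, G.Adj u v) :
    Fintype.card V ≤ #S + #G.edgeFinset := by
  choose! f hfS hfAdj using hS
  have hcompl : #Sᶜ ≤ #G.edgeFinset := by
    refine card_le_card_of_injOn (fun v => s(f v, v)) (fun v hv => ?_) (fun v hv w hw hvw => ?_)
    · simpa using hfAdj v (mem_compl.1 hv)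
    · have hv : v ∉ S := mem_compl.1 hv
      have hw : w ∉ S := mem_compl.1 hw
      rcases Sym2.eq_iff.1 hvw with ⟨-, h⟩ | ⟨-, h⟩
      · exact h
      · exact absurd (h ▸ hfS w hw) hv
  rw [← card_add_card_compl S]
  omega

namespace Timeline

variable {α : Type*}

def liveAt (𝒯 : Finset (α × ℕ × ℕ)) (i : ℕ) : Finset (α × ℕ × ℕ) :=
  𝒯.filter fun x => x.2.1 ≤ i ∧ i ≤ x.2.2

theorem sum_card_liveAt_le (𝒯 : Finset (α × ℕ × ℕ)) {ℓ : ℕ}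
    (hℓ : ∀ x ∈ 𝒯, x.2.2 - x.2.1 ≤ ℓ) (s : Finset ℕ) :
    ∑ i ∈ s, #(liveAt 𝒯 i) ≤ #𝒯 * (ℓ + 1) := by
  have hlength : ∀ x ∈ 𝒯, #(s.filter fun i => x.2.1 ≤ i ∧ i ≤ x.2.2) ≤ ℓ + 1 := fun x hx => by
    calc #(s.filter fun i => x.2.1 ≤ i ∧ i ≤ x.2.2)
        ≤ #(Icc x.2.1 x.2.2) := card_le_card fun i hi => mem_Icc.2 (mem_filter.1 hi).2
      _ ≤ ℓ + 1 := by rw [Nat.card_Icc]; have := hℓ x hx; omega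
  calc ∑ i ∈ s, #(liveAt 𝒯 i)
      = ∑ x ∈ 𝒯, #(s.filter fun i => x.2.1 ≤ i ∧ i ≤ x.2.2) :=
        (sum_card_bipartiteAbove_eq_sum_card_bipartiteBelow _).symm
    _ ≤ ∑ _x ∈ 𝒯, (ℓ + 1) := sum_le_sum hlength
    _ = #𝒯 * (ℓ + 1) := sum_const_nat fun _ _ => rfl

variable [DecidableEq α]

def activeAt (𝒯 : Finset (α × ℕ × ℕ)) (i : ℕ) : Finset α :=
  (liveAt 𝒯 i).image Prod.fst

theorem mem_activeAt {𝒯 : Finset (α × ℕ × ℕ)} {i : ℕ} {u : α} :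
    u ∈ activeAt 𝒯 i ↔ ∃ x ∈ 𝒯, x.1 = u ∧ x.2.1 ≤ i ∧ i ≤ x.2.2 := by
  simp only [activeAt, liveAt, mem_image, mem_filter, and_assoc]
  exact exists_congr fun x => by tauto

theorem card_le_mul_card_univ [Fintype α] (𝒯 : Finset (α × ℕ × ℕ)) {k : ℕ}
    (hk : ∀ v : α, #(𝒯.filter fun x => x.1 = v) ≤ k) :
    #𝒯 ≤ k * Fintype.card α :=
  card_le_mul_card_image_of_maps_to (fun x _ => mem_univ x.1) k fun v _ => hk v

end Timeline

open Timeline in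
/-- If every snapshot of a temporal graph on `n` vertices has fewer than `n/2` edges and a
`k`-activity `ℓ`-timeline dominates every temporal vertex, then `T ≤ 2·k·(ℓ+1)`. -/
theorem stmt6 {V : Type*} [Fintype V] [DecidableEq V] (T k ℓ : ℕ)
    (G : ℕ → SimpleGraph V) [∀ i, DecidableRel (G i).Adj]
    (hE : ∀ i ∈ Finset.Icc 1 T, 2 * (G i).edgeFinset.card < Fintype.card V)
    (𝒯 : Finset (V × ℕ × ℕ))
    (hI : ∀ x ∈ 𝒯, 1 ≤ x.2.1 ∧ x.2.1 ≤ x.2.2 ∧ x.2.2 ≤ T ∧ x.2.2 - x.2.1 ≤ ℓ)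
    (hk : ∀ v : V, (𝒯.filter (fun x => x.1 = v)).card ≤ k)
    (hdom : ∀ v : V, ∀ i ∈ Finset.Icc 1 T, ∃ u : V, (u = v ∨ (G i).Adj u v) ∧
      ∃ x ∈ 𝒯, x.1 = u ∧ x.2.1 ≤ i ∧ i ≤ x.2.2) :
    T ≤ 2 * k * (ℓ + 1) := by
  set n := Fintype.card V
  have hactive : ∀ i ∈ Icc 1 T, n ≤ 2 * #(activeAt 𝒯 i) := fun i hi => by
    have hdomset : ∀ v ∉ activeAt 𝒯 i, ∃ u ∈ activeAt 𝒯 i, (G i).Adj u v := fun v hv => by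
      obtain ⟨u, rfl | hadj, hu⟩ := hdom v i hi
      · exact absurd (mem_activeAt.2 hu) hv
      · exact ⟨u, mem_activeAt.2 hu, hadj⟩
    have := (G i).card_le_card_add_card_edgeFinset_of_dominating _ hdomset
    have := hE i hi
    omega
  have hcount : n * T ≤ n * (2 * k * (ℓ + 1)) := calc
    n * T = ∑ _i ∈ Icc 1 T, n := by simp [mul_comm]
    _ ≤ ∑ i ∈ Icc 1 T, 2 * #(liveAt 𝒯 i) :=
      sum_le_sum fun i hi => (hactive i hi).trans (by gcongr; exact card_image_le)
    _ ≤ 2 * (#𝒯 * (ℓ + 1)) := by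
      rw [← mul_sum]; gcongr; exact sum_card_liveAt_le 𝒯 (fun x hx => (hI x hx).2.2.2) _
    _ ≤ 2 * (k * n * (ℓ + 1)) := by gcongr; exact card_le_mul_card_univ 𝒯 hk
    _ = n * (2 * k * (ℓ + 1)) := by ring
  rcases Nat.eq_zero_or_pos T with rfl | hT
  · exact Nat.zero_le _
  exact Nat.le_of_mul_le_mul_left hcount (by have := hE 1 (mem_Icc.2 ⟨le_rfl, hT⟩); omega)
end

section
/- Let k' ≥ k_v ≥ 0 and ℓ = 1, and consider time steps T+1, …, T+2k'. Suppose a vertex pair v, v* must each be 'handled' as follows: in each of the 2(k'−k_v) time steps T+1,…,T+2(k'−k_v) both v and v* are isolated (so each must be active there to be dominated), and in each of the last 2k_v time steps they are adjacent only to each other (so at least one of them must be active there). If every activity interval has length exactly at most 1 (covering at most 2 consecutive time steps), then any valid assignment uses at least (k'−k_v) intervals of v and (k'−k_v) intervals of v* within [T+1, T+2(k'−k_v)], and at least k_v further intervals of v or v* within [T+2(k'−k_v)+1, T+2k']; consequently at most k_v intervals of v and v* combined can intersect the time steps 1,…,T. -/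
/-!
An interval of length at most 1 contains at most one of the points `p + 2, p + 4, …, p + 2m`, so
covering them all takes `m` intervals, each starting in `(p, p + 2m]`. This gives `k' - k_v`
intervals of each vertex starting in `(T, T + 2(k' - k_v)]` and `k_v` intervals starting in
`(T + 2(k' - k_v), T + 2k']`. These `2k' - k_v` intervals start after `T`, and there are at most
`2k'` intervals in total, so at most `k_v` of them start by time `T`.
-/

open Finset

section IntervalCounting

variable {α : Type*} (S : Finset α) (f : α → ℕ)

theorem le_card_filter_mem_Ioc_of_covers_even (g : α → ℕ) (hS : ∀ x ∈ S, g x ≤ f x + 1)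
    {p m : ℕ} (hcov : ∀ j ∈ Icc 1 m, ∃ x ∈ S, f x ≤ p + 2 * j ∧ p + 2 * j ≤ g x) :
    m ≤ #{x ∈ S | f x ∈ Ioc p (p + 2 * m)} := by
  have key := card_le_card_of_forall_subsingleton
    (s := Icc 1 m) (t := {x ∈ S | f x ∈ Ioc p (p + 2 * m)})
    (fun j x => f x ≤ p + 2 * j ∧ p + 2 * j ≤ g x) ?_ ?_
  · simpa using key
  · intro j hj
    obtain ⟨x, hx, hf, hg⟩ := hcov j hj
    have := hS x hx
    simp only [mem_Icc] at hj
    exact ⟨x, mem_filter.2 ⟨hx, mem_Ioc.2 ⟨by omega, by omega⟩⟩, hf, hg⟩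
  · rintro x hx j ⟨-, hj⟩ j' ⟨-, hj'⟩
    have := hS x (mem_filter.1 hx).1
    omega

theorem card_filter_le_add_card_filter_mem_Ioc [DecidableEq α] {a b : ℕ} (hab : a ≤ b) :
    #{x ∈ S | f x ≤ a} + #{x ∈ S | f x ∈ Ioc a b} = #{x ∈ S | f x ≤ b} := by
  rw [← card_union_of_disjoint, ← filter_or]
  · exact congrArg card (filter_congr fun x _ => by simp only [mem_Ioc]; omega)
  · exact disjoint_filter.2 fun x _ h h' => by simp only [mem_Ioc] at h'; omega

end IntervalCounting

/-- Counting lemma for the pair-vertex gadget (`ℓ = 1`): if in each of the time steps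
`T+1, …, T+2(k'−k_v)` both vertices of the pair (indexed by `Fin 2`) are active (they are
isolated there), and in each of the time steps `T+2(k'−k_v)+1, …, T+2k'` at least one of
them is active (they are adjacent only to each other there), and each vertex has at most
`k'` activity intervals, each of length at most `1`, then: each vertex uses at least
`k'−k_v` intervals intersecting `[T+1, T+2(k'−k_v)]`, at least `k_v` further intervals
intersect `[T+2(k'−k_v)+1, T+2k']`, and consequently at most `k_v` intervals of the two
vertices combined intersect the time steps `1, …, T`. -/
theorem stmt19 (T k' kv : ℕ) (hkv : kv ≤ k')
    (𝒯 : Finset (Fin 2 × ℕ × ℕ))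
    (hI : ∀ x ∈ 𝒯, 1 ≤ x.2.1 ∧ x.2.1 ≤ x.2.2 ∧ x.2.2 - x.2.1 ≤ 1)
    (hk : ∀ u : Fin 2, (𝒯.filter (fun x => x.1 = u)).card ≤ k')
    (hiso : ∀ i ∈ Finset.Icc (T + 1) (T + 2 * (k' - kv)), ∀ u : Fin 2,
      ∃ x ∈ 𝒯, x.1 = u ∧ x.2.1 ≤ i ∧ i ≤ x.2.2)
    (hpair : ∀ i ∈ Finset.Icc (T + 2 * (k' - kv) + 1) (T + 2 * k'),
      ∃ x ∈ 𝒯, x.2.1 ≤ i ∧ i ≤ x.2.2) :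
    (∀ u : Fin 2, k' - kv ≤ (𝒯.filter (fun x =>
        x.1 = u ∧ x.2.1 ≤ T + 2 * (k' - kv) ∧ T + 1 ≤ x.2.2)).card) ∧
    kv ≤ (𝒯.filter (fun x =>
        x.2.1 ≤ T + 2 * k' ∧ T + 2 * (k' - kv) + 1 ≤ x.2.2)).card ∧
    (𝒯.filter (fun x => x.2.1 ≤ T)).card ≤ kv := by
  set m := k' - kv
  have hlen : ∀ x ∈ 𝒯, x.2.2 ≤ x.2.1 + 1 := fun x hx => by have := hI x hx; omega
  have hiso_start (u : Fin 2) : m ≤ #{x ∈ {x ∈ 𝒯 | x.2.1 ∈ Ioc T (T + 2 * m)} | x.1 = u} := by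
    rw [filter_comm (fun x : Fin 2 × ℕ × ℕ => x.2.1 ∈ Ioc T (T + 2 * m))]
    refine le_card_filter_mem_Ioc_of_covers_even {x ∈ 𝒯 | x.1 = u} (·.2.1) (·.2.2)
      (fun x hx => hlen x (mem_filter.1 hx).1) fun j hj => ?_
    obtain ⟨x, hx, rfl, hcov⟩ := hiso (T + 2 * j) (by simp only [mem_Icc] at hj ⊢; omega) u
    exact ⟨x, mem_filter.2 ⟨hx, rfl⟩, hcov⟩
  have hpair_start : kv ≤ #{x ∈ 𝒯 | x.2.1 ∈ Ioc (T + 2 * m) (T + 2 * k')} := by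
    rw [show T + 2 * k' = T + 2 * m + 2 * kv by omega]
    exact le_card_filter_mem_Ioc_of_covers_even 𝒯 (·.2.1) (·.2.2) hlen fun j hj =>
      hpair _ (by simp only [mem_Icc] at hj ⊢; omega)
  have hiso_start_both : 2 * m ≤ #{x ∈ 𝒯 | x.2.1 ∈ Ioc T (T + 2 * m)} := by
    rw [card_eq_sum_card_fiberwise (f := Prod.fst) (t := univ) fun x _ => mem_univ x.1,
      Fin.sum_univ_two]
    have := hiso_start 0
    have := hiso_start 1
    omega
  have htotal : #𝒯 ≤ 2 * k' := by
    simpa [mul_comm] using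
      card_le_mul_card_image_of_maps_to (fun x _ => mem_univ x.1) k' fun u _ => hk u
  refine ⟨fun u => (hiso_start u).trans ?_, hpair_start.trans ?_, ?_⟩
  · rw [filter_filter]
    exact card_le_card <| monotone_filter_right _ fun x hx h => by
      have := hI x hx; simp only [mem_Ioc] at h; omega
  · exact card_le_card <| monotone_filter_right _ fun x hx h => by
      have := hI x hx; simp only [mem_Ioc] at h; omega
  · have hsplit_iso := card_filter_le_add_card_filter_mem_Ioc 𝒯 (·.2.1)
      (Nat.le_add_right T (2 * m))
    have hsplit_pair := card_filter_le_add_card_filter_mem_Ioc 𝒯 (·.2.1)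
      (show T + 2 * m ≤ T + 2 * k' by omega)
    have := card_filter_le 𝒯 fun x => x.2.1 ≤ T + 2 * k'
    omega
end
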